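/- Main proposition (point detector): Let ρ, j be C^1 on ℝ² with ρ > 0, satisfying ∂_t ρ + ∂_x j = 0, with complete Bohmian flow, and ∫ℝ ρ(0,ξ)dξ = 1. For a ∈ ℝ let D = {(t,a) : t ≥ 0} and f_a(s) = ∫_0^s j(t,a) dt. Then the detection probability satisfies, for all τ ≥ 0: P(τ) = max{f_a(s) : 0 ≤ s ≤ τ} + max{−f_a(s) : 0 ≤ s ≤ τ}, where P(τ) = ∫_{𝒳₀(D_τ)} ρ(0,ξ) dξ with D_τ = {(t,a) : 0 ≤ t ≤ τ}. -/

import Mathlib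

/-!
The continuity equation says that the field `(ρ, j)` on the `(t, x)`-plane is divergence free, so
it has a stream function `Q(t, x) = ∫_a^x ρ(t, ξ) dξ - ∫_0^t j(r, a) dr`, with `∂ₓQ = ρ` and
`∂ₜQ = -j`. Bohmian trajectories are tangent to `(ρ, j)`, hence are level curves of `Q`. Comparing
the two ends of the trajectory through `(t, a)` gives `G (𝒳₀ (t, a)) = -f_a t` for the strictly
increasing `G y = ∫_a^y ρ(0, ξ) dξ`. So `𝒳₀(D_τ)` is the `G`-preimage of the interval
`-f_a '' [0, τ] = [-max f_a, max (-f_a)]`, and its `ρ(0, ·)`-mass is the length of that interval.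
-/

open Set MeasureTheory intervalIntegral

section SliceIntegrals

variable {E : Type*} [NormedAddCommGroup E] [NormedSpace ℝ E] {g : ℝ × ℝ → E}

theorem DifferentiableAt.hasDerivAt_comp_prodMk_left {s ξ : ℝ}
    (hg : DifferentiableAt ℝ g (s, ξ)) :
    HasDerivAt (fun s => g (s, ξ)) (fderiv ℝ g (s, ξ) (1, 0)) s :=
  hg.hasFDerivAt.comp_hasDerivAt s ((hasDerivAt_id s).prodMk (hasDerivAt_const s ξ))

theorem DifferentiableAt.hasDerivAt_comp_prodMk_right {s ξ : ℝ}
    (hg : DifferentiableAt ℝ g (s, ξ)) :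
    HasDerivAt (fun ξ => g (s, ξ)) (fderiv ℝ g (s, ξ) (0, 1)) ξ :=
  hg.hasFDerivAt.comp_hasDerivAt ξ ((hasDerivAt_const ξ s).prodMk (hasDerivAt_id ξ))

theorem hasDerivAt_intervalIntegral_of_contDiff (hg : ContDiff ℝ 1 g) (a b s₀ : ℝ) :
    HasDerivAt (fun s => ∫ ξ in a..b, g (s, ξ))
      (∫ ξ in a..b, fderiv ℝ g (s₀, ξ) (1, 0)) s₀ := by
  have hg' : Continuous fun p => fderiv ℝ g p (1, 0) :=
    (hg.continuous_fderiv one_ne_zero).clm_apply continuous_const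
  obtain ⟨C, hC⟩ := ((isCompact_closedBall s₀ 1).prod (isCompact_uIcc (a := a) (b := b))
    ).exists_bound_of_continuousOn hg'.continuousOn
  have hslice (s : ℝ) : Continuous fun ξ => g (s, ξ) :=
    hg.continuous.comp' (Continuous.prodMk_right s)
  refine (hasDerivAt_integral_of_dominated_loc_of_deriv_le (bound := fun _ => C)
    (Metric.ball_mem_nhds s₀ one_pos) (.of_forall fun s => (hslice s).aestronglyMeasurable)
    ((hslice s₀).intervalIntegrable _ _)
    (hg'.comp' (Continuous.prodMk_right s₀)).aestronglyMeasurable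
    (ae_of_all _ fun ξ hξ s hs =>
      hC (s, ξ) ⟨Metric.ball_subset_closedBall hs, uIoc_subset_uIcc hξ⟩)
    intervalIntegrable_const
    (ae_of_all _ fun ξ _ s _ =>
      (hg.differentiable one_ne_zero _).hasDerivAt_comp_prodMk_left)).2

variable [CompleteSpace E]

theorem integral_fderiv_apply_snd_eq_sub (hg : ContDiff ℝ 1 g) (s a b : ℝ) :
    ∫ ξ in a..b, fderiv ℝ g (s, ξ) (0, 1) = g (s, b) - g (s, a) :=
  integral_eq_sub_of_hasDerivAt
    (fun _ _ => (hg.differentiable one_ne_zero _).hasDerivAt_comp_prodMk_right)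
    ((((hg.continuous_fderiv one_ne_zero).comp' (Continuous.prodMk_right s)).clm_apply
      continuous_const).intervalIntegrable _ _)

theorem hasFDerivAt_intervalIntegral_upperBound (hg : Continuous g) (p₀ : ℝ × ℝ) :
    HasFDerivAt (fun p : ℝ × ℝ => ∫ ξ in p₀.2..p.2, g (p.1, ξ))
      ((ContinuousLinearMap.snd ℝ ℝ ℝ).smulRight (g p₀)) p₀ := by
  refine .of_isLittleO (Asymptotics.isLittleO_iff.2 fun ε hε => ?_)
  obtain ⟨δ, hδ, hg₀⟩ := Metric.continuousAt_iff.1 (hg.continuousAt (x := p₀)) ε hε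
  filter_upwards [Metric.ball_mem_nhds p₀ hδ] with p hp
  have hsplit : (∫ ξ in p₀.2..p.2, g (p.1, ξ)) - (∫ ξ in p₀.2..p₀.2, g (p₀.1, ξ))
      - (ContinuousLinearMap.snd ℝ ℝ ℝ).smulRight (g p₀) (p - p₀)
      = ∫ ξ in p₀.2..p.2, (g (p.1, ξ) - g p₀) := by
    rw [integral_same, sub_zero, integral_sub
      ((hg.comp' (Continuous.prodMk_right p.1)).intervalIntegrable _ _) intervalIntegrable_const]
    simp
  rw [hsplit]
  calc ‖∫ ξ in p₀.2..p.2, (g (p.1, ξ) - g p₀)‖ ≤ ε * |p.2 - p₀.2| := by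
        refine norm_integral_le_of_norm_le_const fun ξ hξ => ?_
        rw [← dist_eq_norm]
        refine (hg₀ (lt_of_le_of_lt ?_ hp)).le
        rw [Prod.dist_eq, Prod.dist_eq]
        refine max_le_max le_rfl ?_
        simpa [Real.dist_eq] using abs_sub_left_of_mem_uIcc (uIoc_subset_uIcc hξ)
    _ ≤ ε * ‖p - p₀‖ := by
        gcongr
        exact norm_snd_le (p - p₀)

theorem hasFDerivAt_intervalIntegral_prod (hg : ContDiff ℝ 1 g) (a : ℝ) (p₀ : ℝ × ℝ) :
    HasFDerivAt (fun p : ℝ × ℝ => ∫ ξ in a..p.2, g (p.1, ξ))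
      ((ContinuousLinearMap.fst ℝ ℝ ℝ).smulRight (∫ ξ in a..p₀.2, fderiv ℝ g (p₀.1, ξ) (1, 0))
        + (ContinuousLinearMap.snd ℝ ℝ ℝ).smulRight (g p₀)) p₀ := by
  have hsplit : (fun p : ℝ × ℝ => ∫ ξ in a..p.2, g (p.1, ξ))
      = fun p => (∫ ξ in a..p₀.2, g (p.1, ξ)) + ∫ ξ in p₀.2..p.2, g (p.1, ξ) := by
    funext p
    exact (integral_add_adjacent_intervals
      ((hg.continuous.comp' (Continuous.prodMk_right p.1)).intervalIntegrable _ _)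
      ((hg.continuous.comp' (Continuous.prodMk_right p.1)).intervalIntegrable _ _)).symm
  rw [hsplit]
  refine (((hasDerivAt_intervalIntegral_of_contDiff hg a p₀.2 p₀.1).hasFDerivAt.comp p₀
    hasFDerivAt_fst).add (hasFDerivAt_intervalIntegral_upperBound hg.continuous p₀)
    ).congr_fderiv ?_
  ext <;> simp

end SliceIntegrals

section StreamFunction

variable {ρ j : ℝ × ℝ → ℝ}

noncomputable def streamFunction (ρ j : ℝ × ℝ → ℝ) (a : ℝ) (p : ℝ × ℝ) : ℝ :=
  (∫ ξ in a..p.2, ρ (p.1, ξ)) - ∫ r in (0 : ℝ)..p.1, j (r, a)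

theorem hasFDerivAt_streamFunction (hρ : ContDiff ℝ 1 ρ) (hj : ContDiff ℝ 1 j)
    (hcont : ∀ p : ℝ × ℝ, fderiv ℝ ρ p (1, 0) + fderiv ℝ j p (0, 1) = 0) (a : ℝ) (p : ℝ × ℝ) :
    HasFDerivAt (streamFunction ρ j a)
      (ρ p • ContinuousLinearMap.snd ℝ ℝ ℝ - j p • ContinuousLinearMap.fst ℝ ℝ ℝ) p := by
  have hflux : HasFDerivAt (fun p : ℝ × ℝ => ∫ r in (0 : ℝ)..p.1, j (r, a))
      (j (p.1, a) • ContinuousLinearMap.fst ℝ ℝ ℝ) p :=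
    ((hj.continuous.comp' (Continuous.prodMk_left a)).integral_hasStrictDerivAt 0 p.1
      ).hasDerivAt.comp_hasFDerivAt p hasFDerivAt_fst
  have htime : ∫ ξ in a..p.2, fderiv ℝ ρ (p.1, ξ) (1, 0) = j (p.1, a) - j p := by
    simp only [fun ξ => eq_neg_of_add_eq_zero_left (hcont (p.1, ξ)), intervalIntegral.integral_neg,
      integral_fderiv_apply_snd_eq_sub hj]
    ring
  refine ((hasFDerivAt_intervalIntegral_prod hρ a p).sub hflux).congr_fderiv ?_
  rw [htime]
  ext <;> simp

theorem streamFunction_eq_of_hasDerivAt (hρ : ContDiff ℝ 1 ρ) (hj : ContDiff ℝ 1 j)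
    (hρpos : ∀ p, 0 < ρ p)
    (hcont : ∀ p : ℝ × ℝ, fderiv ℝ ρ p (1, 0) + fderiv ℝ j p (0, 1) = 0) (a : ℝ)
    {γ : ℝ → ℝ × ℝ} (hγ : ∀ s, HasDerivAt γ (1, j (γ s) / ρ (γ s)) s) (s : ℝ) :
    streamFunction ρ j a (γ s) = streamFunction ρ j a (γ 0) := by
  have hconst : ∀ s, HasDerivAt (streamFunction ρ j a ∘ γ) 0 s := fun s => by
    refine ((hasFDerivAt_streamFunction hρ hj hcont a (γ s)).comp_hasDerivAt s (hγ s)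
      ).congr_deriv ?_
    simp [mul_div_cancel₀ _ (hρpos (γ s)).ne']
  exact is_const_of_deriv_eq_zero (fun s => (hconst s).differentiableAt)
    (fun s => (hconst s).deriv) s 0

end StreamFunction

theorem fst_eq_add_of_hasDerivAt {γ : ℝ → ℝ × ℝ} {v : ℝ → ℝ}
    (hγ : ∀ s, HasDerivAt γ (1, v s) s) (s : ℝ) : (γ s).1 = (γ 0).1 + s := by
  have hconst : ∀ s, HasDerivAt (fun s => (γ s).1 - s) 0 s := fun s => by
    have hfst : HasDerivAt (fun s => (γ s).1) 1 s :=
      (hasFDerivAt_fst (𝕜 := ℝ) (p := γ s)).comp_hasDerivAt s (hγ s)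
    simpa using hfst.fun_sub (hasDerivAt_id' s)
  have := is_const_of_deriv_eq_zero (fun s => (hconst s).differentiableAt)
    (fun s => (hconst s).deriv) s 0
  simp only [sub_zero] at this
  linarith

theorem setIntegral_image_Icc_eq_sSup_sub_sInf {G h ψ u : ℝ → ℝ}
    (hG : ∀ y, HasDerivAt G (h y) y) (hh : Continuous h) (hpos : ∀ y, 0 < h y)
    {s t : ℝ} (hst : s ≤ t) (hu : ContinuousOn u (Icc s t))
    (hGψ : ∀ r ∈ Icc s t, G (ψ r) = u r) :
    ∫ y in ψ '' Icc s t, h y = sSup (u '' Icc s t) - sInf (u '' Icc s t) := by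
  have hmono : StrictMono G := strictMono_of_deriv_pos fun y => (hG y).deriv ▸ hpos y
  have himage := hu.image_Icc hst
  have hle : sInf (u '' Icc s t) ≤ sSup (u '' Icc s t) :=
    nonempty_Icc.1 (himage ▸ (nonempty_Icc.2 hst).image u)
  obtain ⟨r₁, hr₁, hr₁u⟩ : sInf (u '' Icc s t) ∈ u '' Icc s t := himage.ge (left_mem_Icc.2 hle)
  obtain ⟨r₂, hr₂, hr₂u⟩ : sSup (u '' Icc s t) ∈ u '' Icc s t := himage.ge (right_mem_Icc.2 hle)
  rw [← hr₁u, ← hr₂u, ← hGψ r₁ hr₁, ← hGψ r₂ hr₂] at hle himage ⊢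
  -- `G` is injective, so `ψ '' Icc s t` is the `G`-preimage of the interval `u '' Icc s t`.
  have hψ : ψ '' Icc s t = Icc (ψ r₁) (ψ r₂) := by
    rw [← preimage_image_eq (ψ '' Icc s t) hmono.injective, image_image, image_congr hGψ, himage]
    ext y
    simp only [mem_preimage, mem_Icc, hmono.le_iff_le]
  rw [hψ, integral_Icc_eq_integral_Ioc, ← integral_of_le (hmono.le_iff_le.1 hle),
    integral_eq_sub_of_hasDerivAt (fun y _ => hG y) (hh.intervalIntegrable _ _)]

theorem integral_initial_density_eq_neg_flux {ρ j : ℝ × ℝ → ℝ}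
    (hρ : ContDiff ℝ 1 ρ) (hj : ContDiff ℝ 1 j) (hρpos : ∀ p, 0 < ρ p)
    (hcont : ∀ p : ℝ × ℝ, fderiv ℝ ρ p (1, 0) + fderiv ℝ j p (0, 1) = 0)
    {F : ℝ → ℝ × ℝ → ℝ × ℝ} (hF0 : ∀ p, F 0 p = p)
    (hFode : ∀ (p : ℝ × ℝ) (s : ℝ),
      HasDerivAt (fun τ => F τ p) ((1 : ℝ), j (F s p) / ρ (F s p)) s) (a t : ℝ) :
    ∫ ξ in a..(F (-t) (t, a)).2, ρ (0, ξ) = -∫ r in (0 : ℝ)..t, j (r, a) := by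
  have hstart : (F (-t) (t, a)).1 = 0 := by
    rw [fst_eq_add_of_hasDerivAt (hFode (t, a)), hF0, add_neg_cancel]
  have := streamFunction_eq_of_hasDerivAt hρ hj hρpos hcont a (hFode (t, a)) (-t)
  simpa [streamFunction, hF0, hstart] using this

theorem point_detector_formula_general
    (ρ j : ℝ × ℝ → ℝ)
    (hρ : ContDiff ℝ 1 ρ) (hj : ContDiff ℝ 1 j)
    (hρpos : ∀ p, 0 < ρ p)
    (hcont : ∀ p : ℝ × ℝ, fderiv ℝ ρ p (1, 0) + fderiv ℝ j p (0, 1) = 0)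
    (F : ℝ → ℝ × ℝ → ℝ × ℝ)
    (hF0 : ∀ p, F 0 p = p)
    (hFode : ∀ (p : ℝ × ℝ) (s : ℝ),
      HasDerivAt (fun τ => F τ p) ((1 : ℝ), j (F s p) / ρ (F s p)) s)
    (𝒳₀ : ℝ × ℝ → ℝ)
    (h𝒳₀ : ∀ p : ℝ × ℝ, 𝒳₀ p = (F (-p.1) p).2)
    (a : ℝ)
    (fa : ℝ → ℝ) (hfa : ∀ s, fa s = ∫ t in (0:ℝ)..s, j (t, a)) :
    ∀ τ : ℝ, 0 ≤ τ →
      (∫ ξ in (𝒳₀ '' {p : ℝ × ℝ | p.2 = a ∧ 0 ≤ p.1 ∧ p.1 ≤ τ}), ρ (0, ξ)) =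
        sSup (fa '' Icc 0 τ) + sSup ((fun s => -fa s) '' Icc 0 τ) := by
  intro τ hτ
  have hD : {p : ℝ × ℝ | p.2 = a ∧ 0 ≤ p.1 ∧ p.1 ≤ τ} = (fun t => (t, a)) '' Icc 0 τ := by
    ext ⟨t, x⟩
    simp [eq_comm, and_comm]
  have hρ₀ : Continuous fun ξ => ρ (0, ξ) := hρ.continuous.comp' (Continuous.prodMk_right 0)
  have hfa_cont : Continuous fa := by
    rw [funext hfa]
    exact continuous_primitive
      (fun _ _ => (hj.continuous.comp' (Continuous.prodMk_left a)).intervalIntegrable _ _) 0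
  rw [hD, image_image, setIntegral_image_Icc_eq_sSup_sub_sInf (u := fun s => -fa s)
    (fun y => (hρ₀.integral_hasStrictDerivAt a y).hasDerivAt) hρ₀ (fun _ => hρpos _) hτ
    hfa_cont.neg.continuousOn fun t _ => by
      rw [h𝒳₀, hfa]
      exact integral_initial_density_eq_neg_flux hρ hj hρpos hcont hF0 hFode a t,
    ← image_image Neg.neg fa, image_neg_eq_neg, Real.sInf_neg, sub_neg_eq_add, add_comm]

/-- main proposition, point detector: for D = {(t,a) : t ≥ 0}
and f_a(s) = ∫_0^s j(t,a) dt, the Bohmian detection probability satisfies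
P(τ) = max{f_a(s) : 0 ≤ s ≤ τ} + max{−f_a(s) : 0 ≤ s ≤ τ} for all τ ≥ 0. -/
theorem point_detector_formula
    (ρ j : ℝ × ℝ → ℝ)
    (hρ : ContDiff ℝ 1 ρ) (hj : ContDiff ℝ 1 j)
    (hρpos : ∀ p, 0 < ρ p)
    (hcont : ∀ p : ℝ × ℝ, fderiv ℝ ρ p (1, 0) + fderiv ℝ j p (0, 1) = 0)
    (F : ℝ → ℝ × ℝ → ℝ × ℝ)
    (hF0 : ∀ p, F 0 p = p)
    (hFgroup : ∀ r s p, F r (F s p) = F (r + s) p)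
    (hFode : ∀ (p : ℝ × ℝ) (s : ℝ),
      HasDerivAt (fun τ => F τ p) ((1 : ℝ), j (F s p) / ρ (F s p)) s)
    (𝒳₀ : ℝ × ℝ → ℝ)
    (h𝒳₀ : ∀ p : ℝ × ℝ, 𝒳₀ p = (F (-p.1) p).2)
    (hint : Integrable (fun ξ => ρ (0, ξ)))
    (hnorm : (∫ ξ : ℝ, ρ (0, ξ)) = 1)
    (a : ℝ)
    (fa : ℝ → ℝ) (hfa : ∀ s, fa s = ∫ t in (0:ℝ)..s, j (t, a)) :
    ∀ τ : ℝ, 0 ≤ τ →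
      (∫ ξ in (𝒳₀ '' {p : ℝ × ℝ | p.2 = a ∧ 0 ≤ p.1 ∧ p.1 ≤ τ}), ρ (0, ξ)) =
        sSup (fa '' Icc 0 τ) + sSup ((fun s => -fa s) '' Icc 0 τ) :=
  point_detector_formula_general ρ j hρ hj hρpos hcont F hF0 hFode 𝒳₀ h𝒳₀ a fa hfa
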